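/- arXiv:2207.05407 — 12 statements merged into one kernel-verified Lean document; each statement's English description precedes it below -/
import Mathlib

section
/- Let L and B be complete lattices, α : L → B and γ : B → L a Galois connection (α left adjoint to γ), and lo : L → L, be : B → B monotone functions. If α ∘ lo = be ∘ α, then α applied to the least fixpoint of lo equals the least fixpoint of be. -/
theorem stmt0 {L B : Type*} [CompleteLattice L] [CompleteLattice B]
    (α : L → B) (γ : B → L) (hgc : GaloisConnection α γ)
    (lo : L →o L) (be : B →o B)
    (h : ∀ l, α (lo l) = be (α l)) :
    α (OrderHom.lfp lo) = OrderHom.lfp be := by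
  apply le_antisymm
  · rw [hgc]
    apply OrderHom.lfp_le
    rw [← hgc, h]
    exact le_trans (be.monotone (hgc.l_u_le _)) (OrderHom.map_lfp be).le
  · apply OrderHom.lfp_le
    rw [← h, OrderHom.map_lfp]
end

section
/- Let L, B be complete lattices with a Galois connection α ⊣ γ, let c = γ ∘ α be the induced closure operator, let lo : L → L be monotone, and define be = α ∘ lo ∘ γ. If lo is c-compatible, i.e. lo ∘ c ⊑ c ∘ lo pointwise, then α ∘ lo = be ∘ α, and hence α of the least fixpoint of lo equals the least fixpoint of be. -/
theorem stmt1 {L B : Type*} [CompleteLattice L] [CompleteLattice B]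
    (α : L → B) (γ : B → L) (hgc : GaloisConnection α γ)
    (lo : L →o L)
    (hcompat : ∀ l, lo (γ (α l)) ≤ γ (α (lo l))) :
    (∀ l, α (lo l) = α (lo (γ (α l)))) ∧
    α (OrderHom.lfp lo) =
      OrderHom.lfp ⟨fun b => α (lo (γ b)),
        fun _ _ hb => hgc.monotone_l (lo.monotone (hgc.monotone_u hb))⟩ := by
  set be : B →o B := ⟨fun b => α (lo (γ b)),
    fun _ _ hb => hgc.monotone_l (lo.monotone (hgc.monotone_u hb))⟩ with hbe
  have key : ∀ l, α (lo l) = α (lo (γ (α l))) := by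
    intro l
    apply le_antisymm
    · exact hgc.monotone_l (lo.monotone (hgc.le_u_l l))
    · exact le_trans (hgc.monotone_l (hcompat l)) (hgc.l_u_le _)
  refine ⟨key, le_antisymm ?_ ?_⟩
  · rw [hgc _ _]
    apply OrderHom.lfp_le
    rw [← hgc _ _]
    exact le_of_eq (OrderHom.map_lfp be)
  · apply OrderHom.lfp_le
    show α (lo (γ (α (OrderHom.lfp lo)))) ≤ α (OrderHom.lfp lo)
    rw [← key]
    rw [OrderHom.map_lfp lo]
end

section
/- Let (X, →) be a finitely branching labelled transition system over alphabet A and (X_i)_{i∈I} a family of subsets of X. Then for each a ∈ A, ◇_a(⋂_{i∈I} X_i) = ⋂_{I₀ ⊆ I finite} ◇_a(⋂_{i∈I₀} X_i), where ◇_a(S) = {x ∈ X ∣ ∃ x' ∈ S, x →ᵃ x'}. -/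
/-- Diamond modality of a labelled transition system. -/
def Diamond {X A : Type*} (tr : X → A → X → Prop) (a : A) (S : Set X) : Set X :=
  {x | ∃ x' ∈ S, tr x a x'}

theorem stmt6 {X A I : Type*} (tr : X → A → X → Prop)
    (hfb : ∀ x, {p : A × X | tr x p.1 p.2}.Finite)
    (Xi : I → Set X) (a : A) :
    Diamond tr a (⋂ i, Xi i) =
      ⋂ I₀ : Finset I, Diamond tr a (⋂ i ∈ I₀, Xi i) := by
  classical
  ext x
  simp only [Set.mem_iInter]
  constructor
  · rintro ⟨x', hx', htr⟩ I₀
    exact ⟨x', by simp only [Set.mem_iInter] at hx' ⊢; intro i _; exact hx' i, htr⟩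
  · intro h
    by_contra hc
    -- successors of x
    have hSfin : {x' | tr x a x'}.Finite :=
      ((hfb x).image Prod.snd).subset (fun x' hx' => ⟨(a, x'), hx', rfl⟩)
    -- each successor fails some Xi
    have hbad : ∀ x' ∈ hSfin.toFinset, ∃ i, x' ∉ Xi i := by
      intro x' hx'
      rw [Set.Finite.mem_toFinset] at hx'
      by_contra hno
      push_neg at hno
      exact hc ⟨x', Set.mem_iInter.2 hno, hx'⟩
    choose f hf using hbad
    set I₀ : Finset I := hSfin.toFinset.attach.image (fun p => f p.1 p.2) with hI₀
    obtain ⟨x', hx', htr⟩ := h I₀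
    have hmem : x' ∈ hSfin.toFinset := Set.Finite.mem_toFinset _ |>.2 htr
    have : f x' hmem ∈ I₀ := Finset.mem_image.2 ⟨⟨x', hmem⟩, Finset.mem_attach _ _, rfl⟩
    simp only [Set.mem_iInter] at hx'
    exact hf x' hmem (hx' _ this)
end

section
/- With α_b, γ_b as above, the closure c_b = γ_b ∘ α_b on subsets 𝒮 ⊆ 𝒫(X) equals the closure of 𝒮 under arbitrary unions, arbitrary intersections, and complements: γ_b(α_b(𝒮)) is the smallest family containing 𝒮 closed under arbitrary boolean operations. -/
/-- From a set of predicates to the induced equivalence. -/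
def alphab {X : Type*} (S : Set (Set X)) : X → X → Prop :=
  fun x x' => ∀ s ∈ S, (x ∈ s ↔ x' ∈ s)

/-- From an equivalence to the set of closed predicates. -/
def gammab {X : Type*} (R : X → X → Prop) : Set (Set X) :=
  {s | ∀ x x', R x x' → (x ∈ s ↔ x' ∈ s)}

theorem stmt8 {X : Type*} (S : Set (Set X)) :
    gammab (alphab S) =
      ⋂₀ {T : Set (Set X) | S ⊆ T ∧
        (∀ F : Set (Set X), F ⊆ T → ⋃₀ F ∈ T) ∧
        (∀ F : Set (Set X), F ⊆ T → ⋂₀ F ∈ T) ∧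
        (∀ s ∈ T, sᶜ ∈ T)} := by
  ext s
  simp only [Set.mem_sInter, Set.mem_setOf_eq]
  constructor
  · intro hs T hT
    obtain ⟨hST, hU, hI, hC⟩ := hT
    have hclass : ∀ x : X,
        (⋂₀ {t | (t ∈ S ∧ x ∈ t) ∨ (∃ u ∈ S, x ∉ u ∧ t = uᶜ)}) ∈ T := by
      intro x
      apply hI
      rintro t (⟨h1, _⟩ | ⟨u, hu, _, rfl⟩)
      · exact hST h1
      · exact hC u (hST hu)
    have hseq : s = ⋃₀ {c | ∃ x ∈ s,
        c = ⋂₀ {t | (t ∈ S ∧ x ∈ t) ∨ (∃ u ∈ S, x ∉ u ∧ t = uᶜ)}} := by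
      ext y
      constructor
      · intro hy
        refine ⟨_, ⟨y, hy, rfl⟩, ?_⟩
        rintro t (⟨_, h2⟩ | ⟨u, hu, hxu, rfl⟩)
        · exact h2
        · exact hxu
      · rintro ⟨c, ⟨x, hx, rfl⟩, hyc⟩
        have hab : alphab S x y := by
          intro u hu
          constructor
          · intro hxu; exact hyc u (Or.inl ⟨hu, hxu⟩)
          · intro hyu
            by_contra hxu
            exact (hyc uᶜ (Or.inr ⟨u, hu, hxu, rfl⟩)) hyu
        exact (hs x y hab).mp hx
    rw [hseq]
    apply hU
    rintro c ⟨x, _, rfl⟩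
    exact hclass x
  · intro h
    apply h (gammab (alphab S))
    refine ⟨?_, ?_, ?_, ?_⟩
    · intro t ht x y hxy; exact hxy t ht
    · intro F hF x y hxy
      constructor <;> rintro ⟨t, ht, hx⟩
      · exact ⟨t, ht, (hF ht x y hxy).mp hx⟩
      · exact ⟨t, ht, (hF ht x y hxy).mpr hx⟩
    · intro F hF x y hxy
      constructor <;> intro hx t ht
      · exact (hF ht x y hxy).mp (hx t ht)
      · exact (hF ht x y hxy).mpr (hx t ht)
    · intro t ht x y hxy
      simp only [Set.mem_compl_iff]
      exact not_congr (ht x y hxy)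
end

section
/- The closure c_s = γ_s ∘ α_s on families 𝒮 ⊆ 𝒫(X) equals the closure of 𝒮 under arbitrary unions and arbitrary intersections. -/
/-- From a set of predicates to the induced preorder. -/
def alphas {X : Type*} (S : Set (Set X)) : X → X → Prop :=
  fun x₁ x₂ => ∀ s ∈ S, x₁ ∈ s → x₂ ∈ s

/-- From a preorder to its upward-closed predicates. -/
def gammas {X : Type*} (R : X → X → Prop) : Set (Set X) :=
  {s | ∀ x ∈ s, ∀ y, R x y → y ∈ s}

theorem stmt10 {X : Type*} (S : Set (Set X)) :
    gammas (alphas S) =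
      ⋂₀ {T : Set (Set X) | S ⊆ T ∧
        (∀ F : Set (Set X), F ⊆ T → ⋃₀ F ∈ T) ∧
        (∀ F : Set (Set X), F ⊆ T → ⋂₀ F ∈ T)} := by
  apply Set.Subset.antisymm
  · intro s hs T ⟨hST, hU, hI⟩
    have key : s = ⋃₀ ((fun x => ⋂₀ {t ∈ S | x ∈ t}) '' s) := by
      apply Set.Subset.antisymm
      · intro x hx
        exact ⟨_, ⟨x, hx, rfl⟩, fun t ht => ht.2⟩
      · rintro y ⟨_, ⟨x, hx, rfl⟩, hy⟩
        exact hs x hx y (fun t htS hxt => hy t ⟨htS, hxt⟩)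
    rw [key]
    apply hU
    rintro _ ⟨x, hx, rfl⟩
    exact hI _ (fun t ht => hST ht.1)
  · intro s hs
    apply hs
    refine ⟨?_, ?_, ?_⟩
    · intro t ht x hx y hxy
      exact hxy t ht hx
    · intro F hF x hx y hxy
      obtain ⟨t, htF, hxt⟩ := hx
      exact ⟨t, htF, hF htF x hxt y hxy⟩
    · intro F hF x hx y hxy t htF
      exact hF htF x (hx t htF) y hxy
end

section
/- Let R be a congruence relation on 𝒫(X) and X₁, X₂ ⊆ X. Then X₁ R X₂ if and only if for every top element S of an equivalence class of R, X₁ ⊆ S ⟺ X₂ ⊆ S. -/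
theorem stmt12 {X : Type*} (R : Set X → Set X → Prop) (heq : Equivalence R)
    (hcong : ∀ P : Set (Set X × Set X), (∀ p ∈ P, R p.1 p.2) →
      R (⋃ p ∈ P, p.1) (⋃ p ∈ P, p.2))
    (X₁ X₂ : Set X) :
    R X₁ X₂ ↔
      ∀ S : Set X, (∃ S₀, S = ⋃₀ {T | R T S₀}) → (X₁ ⊆ S ↔ X₂ ⊆ S) := by
  -- top element is related to the class representative
  have htop : ∀ S₀ : Set X, R (⋃₀ {T | R T S₀}) S₀ := by
    intro S₀
    have h := hcong {p | R p.1 p.2 ∧ p.2 = S₀} (fun p hp => hp.1)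
    have h1 : (⋃ p ∈ {p : Set X × Set X | R p.1 p.2 ∧ p.2 = S₀}, p.1)
        = ⋃₀ {T | R T S₀} := by
      ext x
      simp only [Set.mem_iUnion, Set.mem_setOf_eq, Set.mem_sUnion, Prod.exists]
      constructor
      · rintro ⟨a, b, ⟨⟨hr, rfl⟩, hx⟩⟩; exact ⟨a, hr, hx⟩
      · rintro ⟨a, hr, hx⟩; exact ⟨a, S₀, ⟨hr, rfl⟩, hx⟩
    have h2 : (⋃ p ∈ {p : Set X × Set X | R p.1 p.2 ∧ p.2 = S₀}, p.2) = S₀ := by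
      ext x
      simp only [Set.mem_iUnion, Set.mem_setOf_eq, Prod.exists]
      constructor
      · rintro ⟨a, b, ⟨⟨hr, rfl⟩, hx⟩⟩; exact hx
      · intro hx; exact ⟨S₀, S₀, ⟨heq.refl _, rfl⟩, hx⟩
    rwa [h1, h2] at h
  -- binary union congruence
  have hcong2 : ∀ A B C D : Set X, R A B → R C D → R (A ∪ C) (B ∪ D) := by
    intro A B C D hAB hCD
    have h := hcong {(A, B), (C, D)} (by
      rintro p hp
      rcases hp with rfl | rfl <;> assumption)
    simpa using h
  -- key: tops are upward absorbing along R
  have key : ∀ (S₀ A B : Set X), R A B → A ⊆ ⋃₀ {T | R T S₀} →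
      B ⊆ ⋃₀ {T | R T S₀} := by
    intro S₀ A B hAB hA
    set T := ⋃₀ {T | R T S₀} with hT
    have h1 : R (A ∪ T) (B ∪ T) := hcong2 _ _ _ _ hAB (heq.refl T)
    rw [Set.union_eq_self_of_subset_left hA] at h1
    have h2 : R (B ∪ T) S₀ := heq.trans (heq.symm h1) (htop S₀)
    have h3 : B ∪ T ⊆ T := Set.subset_sUnion_of_mem h2
    exact fun x hx => h3 (Or.inl hx)
  constructor
  · rintro hR S ⟨S₀, rfl⟩
    exact ⟨key S₀ X₁ X₂ hR, key S₀ X₂ X₁ (heq.symm hR)⟩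
  · intro h
    have hself : ∀ A : Set X, A ⊆ ⋃₀ {T | R T A} :=
      fun A => Set.subset_sUnion_of_mem (heq.refl A)
    have h12 : X₁ ⊆ ⋃₀ {T | R T X₂} :=
      (h _ ⟨X₂, rfl⟩).2 (hself X₂)
    have h21 : X₂ ⊆ ⋃₀ {T | R T X₁} :=
      (h _ ⟨X₁, rfl⟩).1 (hself X₁)
    have heqtop : (⋃₀ {T | R T X₁}) = ⋃₀ {T | R T X₂} := by
      apply Set.Subset.antisymm
      · intro x hx
        rcases hx with ⟨T, hT, hxT⟩
        exact key X₂ X₁ T (heq.symm hT) h12 hxT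
      · intro x hx
        rcases hx with ⟨T, hT, hxT⟩
        exact key X₁ X₂ T (heq.symm hT) h21 hxT
    have r1 : R X₁ (⋃₀ {T | R T X₁}) := heq.symm (htop X₁)
    rw [heqtop] at r1
    exact heq.trans r1 (htop X₂)
end

section
/- Define α_t : 𝒫(𝒫(X)) → Eq(𝒫(X)) by α_t(𝒮) = {(X₁,X₂) ∣ ∀ S ∈ 𝒮, X₁ ∩ S ≠ ∅ ⟺ X₂ ∩ S ≠ ∅} and γ_t(R) = {S ⊆ X ∣ ∀ (X₁,X₂) ∈ R, X₁ ∩ S ≠ ∅ ⟺ X₂ ∩ S ≠ ∅}. Then for every equivalence relation R on 𝒫(X), the co-closure α_t(γ_t(R)) equals the congruence closure of R, the smallest congruence containing R. -/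
/-- From a set of predicates to the induced equivalence on `𝒫(X)`. -/
def alphat {X : Type*} (S : Set (Set X)) : Set X → Set X → Prop :=
  fun X₁ X₂ => ∀ s ∈ S, (X₁ ∩ s ≠ ∅ ↔ X₂ ∩ s ≠ ∅)

/-- From an equivalence on `𝒫(X)` to the set of compatible predicates. -/
def gammat {X : Type*} (R : Set X → Set X → Prop) : Set (Set X) :=
  {s | ∀ X₁ X₂, R X₁ X₂ → (X₁ ∩ s ≠ ∅ ↔ X₂ ∩ s ≠ ∅)}

/-- A congruence: an equivalence on `𝒫(X)` compatible with arbitrary unions. -/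
def IsCongruence {X : Type*} (Q : Set X → Set X → Prop) : Prop :=
  Equivalence Q ∧
    ∀ P : Set (Set X × Set X), (∀ p ∈ P, Q p.1 p.2) →
      Q (⋃ p ∈ P, p.1) (⋃ p ∈ P, p.2)

/-- Saturation of a set under a relation on sets. -/
def qstar {X : Type*} (Q : Set X → Set X → Prop) (A : Set X) : Set X :=
  {x | ∃ C, Q C A ∧ x ∈ C}

lemma subset_qstar {X : Type*} {Q : Set X → Set X → Prop} (hQ : IsCongruence Q)
    (A : Set X) : A ⊆ qstar Q A :=
  fun x hx => ⟨A, hQ.1.refl A, hx⟩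

lemma qstar_rel {X : Type*} {Q : Set X → Set X → Prop} (hQ : IsCongruence Q)
    (A : Set X) : Q (qstar Q A) A := by
  have h := hQ.2 {p | Q p.1 p.2 ∧ p.2 = A} (fun p hp => hp.1)
  have h1 : (⋃ p ∈ {p : Set X × Set X | Q p.1 p.2 ∧ p.2 = A}, p.1) = qstar Q A := by
    ext x
    simp only [Set.mem_iUnion, Set.mem_setOf_eq, qstar]
    constructor
    · rintro ⟨⟨C, D⟩, ⟨hq, rfl⟩, hx⟩; exact ⟨C, hq, hx⟩
    · rintro ⟨C, hq, hx⟩; exact ⟨(C, A), ⟨hq, rfl⟩, hx⟩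
  have h2 : (⋃ p ∈ {p : Set X × Set X | Q p.1 p.2 ∧ p.2 = A}, p.2) = A := by
    ext x
    simp only [Set.mem_iUnion, Set.mem_setOf_eq]
    constructor
    · rintro ⟨⟨C, D⟩, ⟨hq, rfl⟩, hx⟩; exact hx
    · intro hx; exact ⟨(A, A), ⟨hQ.1.refl A, rfl⟩, hx⟩
  rwa [h1, h2] at h

lemma qstar_mono {X : Type*} {Q : Set X → Set X → Prop} (hQ : IsCongruence Q)
    {A B : Set X} (hAB : A ⊆ B) : qstar Q A ⊆ qstar Q B := by
  rintro x ⟨C, hq, hx⟩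
  have h := hQ.2 {(C, A), (B, B)} (by
    rintro p hp
    rcases hp with h | h <;> subst h
    · exact hq
    · exact hQ.1.refl B)
  have h1 : (⋃ p ∈ ({(C, A), (B, B)} : Set (Set X × Set X)), p.1) = C ∪ B := by
    ext y; simp
  have h2 : (⋃ p ∈ ({(C, A), (B, B)} : Set (Set X × Set X)), p.2) = A ∪ B := by
    ext y; simp
  rw [h1, h2, Set.union_eq_right.mpr hAB] at h
  exact ⟨C ∪ B, h, Or.inl hx⟩

lemma qstar_qstar {X : Type*} {Q : Set X → Set X → Prop} (hQ : IsCongruence Q)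
    (A : Set X) : qstar Q (qstar Q A) ⊆ qstar Q A := by
  rintro x ⟨C, hq, hx⟩
  exact ⟨C, hQ.1.trans hq (qstar_rel hQ A), hx⟩

lemma qstar_closed {X : Type*} {Q : Set X → Set X → Prop} (hQ : IsCongruence Q)
    {C D B : Set X} (hCD : Q C D) (hC : C ⊆ qstar Q B) : D ⊆ qstar Q B := by
  have h1 : D ⊆ qstar Q C := fun x hx => ⟨D, hQ.1.symm hCD, hx⟩
  exact h1.trans ((qstar_mono hQ hC).trans (qstar_qstar hQ B))

lemma inter_compl_ne {X : Type*} {E s : Set X} : E ∩ sᶜ ≠ ∅ ↔ ¬ E ⊆ s := by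
  rw [← Set.nonempty_iff_ne_empty, Set.inter_compl_nonempty_iff]

lemma compl_qstar_mem_gammat {X : Type*} {Q : Set X → Set X → Prop}
    (hQ : IsCongruence Q) (B : Set X) : (qstar Q B)ᶜ ∈ gammat Q := by
  intro C D hCD
  rw [inter_compl_ne, inter_compl_ne]
  constructor
  · intro h1 hD; exact h1 (qstar_closed hQ (hQ.1.symm hCD) hD)
  · intro h1 hC; exact h1 (qstar_closed hQ hCD hC)

lemma alphat_gammat_le {X : Type*} {Q : Set X → Set X → Prop} (hQ : IsCongruence Q)
    {A B : Set X} (h : ∀ s ∈ gammat Q, (A ∩ s ≠ ∅ ↔ B ∩ s ≠ ∅)) : Q A B := by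
  have hAB : A ⊆ qstar Q B := by
    by_contra hc
    have hne : A ∩ (qstar Q B)ᶜ ≠ ∅ := inter_compl_ne.mpr hc
    have := (h _ (compl_qstar_mem_gammat hQ B)).mp hne
    rw [← Set.nonempty_iff_ne_empty] at this
    rcases this with ⟨x, hx, hx'⟩
    exact hx' (subset_qstar hQ B hx)
  have hBA : B ⊆ qstar Q A := by
    by_contra hc
    have hne : B ∩ (qstar Q A)ᶜ ≠ ∅ := inter_compl_ne.mpr hc
    have := (h _ (compl_qstar_mem_gammat hQ A)).mpr hne
    rw [← Set.nonempty_iff_ne_empty] at this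
    rcases this with ⟨x, hx, hx'⟩
    exact hx' (subset_qstar hQ A hx)
  have e1 : qstar Q A ⊆ qstar Q B := (qstar_mono hQ hAB).trans (qstar_qstar hQ B)
  have e2 : qstar Q B ⊆ qstar Q A := (qstar_mono hQ hBA).trans (qstar_qstar hQ A)
  have e : qstar Q A = qstar Q B := le_antisymm e1 e2
  have h1 : Q A (qstar Q A) := hQ.1.symm (qstar_rel hQ A)
  rw [e] at h1
  exact hQ.1.trans h1 (qstar_rel hQ B)

lemma alphat_gammat_isCongruence {X : Type*} (R : Set X → Set X → Prop) :
    IsCongruence (alphat (gammat R)) := by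
  constructor
  · exact ⟨fun A s _ => Iff.rfl, fun h s hs => (h s hs).symm,
      fun h1 h2 s hs => (h1 s hs).trans (h2 s hs)⟩
  · intro P hP s hs
    have key : ∀ f : Set X × Set X → Set X, (⋃ p ∈ P, f p) ∩ s ≠ ∅ ↔
        ∃ p ∈ P, f p ∩ s ≠ ∅ := by
      intro f
      simp only [← Set.nonempty_iff_ne_empty]
      constructor
      · rintro ⟨x, hx, hxs⟩
        simp only [Set.mem_iUnion] at hx
        rcases hx with ⟨p, hp, hxp⟩
        exact ⟨p, hp, x, hxp, hxs⟩
      · rintro ⟨p, hp, x, hxp, hxs⟩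
        exact ⟨x, Set.mem_iUnion.mpr ⟨p, Set.mem_iUnion.mpr ⟨hp, hxp⟩⟩, hxs⟩
    rw [key Prod.fst, key Prod.snd]
    constructor
    · rintro ⟨p, hp, hne⟩; exact ⟨p, hp, (hP p hp s hs).mp hne⟩
    · rintro ⟨p, hp, hne⟩; exact ⟨p, hp, (hP p hp s hs).mpr hne⟩

theorem stmt13 {X : Type*} (R : Set X → Set X → Prop) (hR : Equivalence R)
    (X₁ X₂ : Set X) :
    alphat (gammat R) X₁ X₂ ↔
      ∀ Q : Set X → Set X → Prop, IsCongruence Q →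
        (∀ A B, R A B → Q A B) → Q X₁ X₂ := by
  constructor
  · intro h Q hQ hRQ
    apply alphat_gammat_le hQ
    intro s hs
    exact h s (fun A B hAB => hs A B (hRQ A B hAB))
  · intro h
    exact h (alphat (gammat R)) (alphat_gammat_isCongruence R)
      (fun A B hAB s hs => hs A B hAB)
end

section
/- The closure c_t = γ_t ∘ α_t closes a family 𝒮 ⊆ 𝒫(X) under arbitrary unions: γ_t(α_t(𝒮)) is the smallest family containing 𝒮 and closed under arbitrary unions. -/
theorem stmt14 {X : Type*} (S : Set (Set X)) :
    gammat (alphat S) =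
      ⋂₀ {T : Set (Set X) | S ⊆ T ∧
        (∀ F : Set (Set X), F ⊆ T → ⋃₀ F ∈ T)} := by
  ext s
  simp only [Set.mem_sInter, Set.mem_setOf_eq]
  constructor
  · rintro hs T ⟨hST, hU⟩
    have key : s = ⋃₀ {t | t ∈ S ∧ t ⊆ s} := by
      apply Set.Subset.antisymm
      · intro x hx
        by_contra hxu
        set Y : Set X := {y | ∃ t ∈ S, x ∈ t ∧ y ∈ t ∧ y ∉ s} with hY
        have hR : alphat S (insert x Y) Y := by
          intro t ht
          constructor
          · intro h1
            obtain ⟨z, hz⟩ := Set.nonempty_iff_ne_empty.mpr h1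
            rcases hz.1 with rfl | hzY
            · have hnts : ¬ t ⊆ s := by
                intro hts
                exact hxu (Set.mem_sUnion.mpr ⟨t, ⟨ht, hts⟩, hz.2⟩)
              obtain ⟨y, hyt, hys⟩ := Set.not_subset.mp hnts
              exact Set.nonempty_iff_ne_empty.mp ⟨y, ⟨t, ht, hz.2, hyt, hys⟩, hyt⟩
            · exact Set.nonempty_iff_ne_empty.mp ⟨z, hzY, hz.2⟩
          · intro h2
            obtain ⟨z, hz⟩ := Set.nonempty_iff_ne_empty.mpr h2
            exact Set.nonempty_iff_ne_empty.mp ⟨z, Set.mem_insert_of_mem _ hz.1, hz.2⟩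
        have h := hs _ _ hR
        have h1 : (insert x Y) ∩ s ≠ ∅ :=
          Set.nonempty_iff_ne_empty.mp ⟨x, Set.mem_insert _ _, hx⟩
        have h2 : Y ∩ s = ∅ := by
          ext y
          simp only [Set.mem_inter_iff, Set.mem_empty_iff_false, iff_false, not_and]
          rintro ⟨t, ht, hxt, hyt, hys⟩ hys'
          exact hys hys'
        exact (h.mp h1) h2
      · rintro x ⟨t, ⟨ht, hts⟩, hxt⟩
        exact hts hxt
    rw [key]
    exact hU _ (fun t ht => hST ht.1)
  · intro h
    apply h (gammat (alphat S))
    refine ⟨fun t ht X₁ X₂ hR => hR t ht, fun F hF X₁ X₂ hR => ?_⟩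
    constructor
    · intro h1
      obtain ⟨z, hz⟩ := Set.nonempty_iff_ne_empty.mpr h1
      obtain ⟨t, htF, hzt⟩ := hz.2
      have := (hF htF X₁ X₂ hR).mp (Set.nonempty_iff_ne_empty.mp ⟨z, hz.1, hzt⟩)
      obtain ⟨w, hw⟩ := Set.nonempty_iff_ne_empty.mpr this
      exact Set.nonempty_iff_ne_empty.mp ⟨w, hw.1, ⟨t, htF, hw.2⟩⟩
    · intro h2
      obtain ⟨z, hz⟩ := Set.nonempty_iff_ne_empty.mpr h2
      obtain ⟨t, htF, hzt⟩ := hz.2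
      have := (hF htF X₁ X₂ hR).mpr (Set.nonempty_iff_ne_empty.mp ⟨z, hz.1, hzt⟩)
      obtain ⟨w, hw⟩ := Set.nonempty_iff_ne_empty.mpr this
      exact Set.nonempty_iff_ne_empty.mp ⟨w, hw.1, ⟨t, htF, hw.2⟩⟩
end

section
/- Let (X, →, d_A) be a finitely branching metric transition system and ℱ ⊆ [0,1]^X a family of functions. Then for every c ∈ A: ◯_c(⊓_{f∈ℱ} f) = ⊓_{ℱ₀ ⊆ ℱ finite} ◯_c(⊓_{f∈ℱ₀} f), where ◯_c g(x) = sup_{(a,x')∈δ(x)} min(1 − d_A(c,a), g(x')) and meets of functions are pointwise infima. -/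
open unitInterval

instance : Fact ((0:ℝ) ≤ 1) := ⟨zero_le_one⟩

/-- Truncated subtraction on the unit interval. -/
noncomputable def tsub (x y : unitInterval) : unitInterval :=
  ⟨max 0 (x.1 - y.1), le_max_left 0 _,
    max_le zero_le_one (by have := x.2.2; have := y.2.1; linarith)⟩

/-- Truncated addition on the unit interval. -/
noncomputable def tadd (x y : unitInterval) : unitInterval :=
  ⟨min 1 (x.1 + y.1), le_min zero_le_one (by have := x.2.1; have := y.2.1; linarith),
    min_le_left _ _⟩

theorem stmt16 {X A : Type*} (tr : X → A → X → Prop)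
    (hfb : ∀ x, {p : A × X | tr x p.1 p.2}.Finite)
    (dA : A → A → unitInterval)
    (F : Set (X → unitInterval)) (c : A) :
    (fun x => ⨆ p : {p : A × X // tr x p.1 p.2},
        unitInterval.symm (dA c p.1.1) ⊓ ⨅ f ∈ F, f p.1.2) =
      ⨅ (F₀ : Set (X → unitInterval)) (_ : F₀ ⊆ F) (_ : F₀.Finite),
        (fun x => ⨆ p : {p : A × X // tr x p.1 p.2},
          unitInterval.symm (dA c p.1.1) ⊓ ⨅ f ∈ F₀, f p.1.2) := by
  funext x
  simp only [iInf_apply]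
  haveI : Finite {p : A × X // tr x p.1 p.2} := (hfb x).to_subtype
  set P := {p : A × X // tr x p.1 p.2}
  set s : P → unitInterval := fun p => unitInterval.symm (dA c p.1.1) with hs
  set L : unitInterval := ⨆ p : P, s p ⊓ ⨅ f ∈ F, f p.1.2 with hL
  apply le_antisymm
  · refine le_iInf fun F₀ => le_iInf fun hsub => le_iInf fun _ => iSup_mono fun p => ?_
    exact inf_le_inf_left _ (iInf_le_iInf_of_subset hsub)
  · by_contra h
    rw [not_le] at h
    set J : unitInterval := ⨅ (F₀ : Set (X → unitInterval)) (_ : F₀ ⊆ F) (_ : F₀.Finite),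
        ⨆ p : P, s p ⊓ ⨅ f ∈ F₀, f p.1.2 with hI
    -- h : L < J
    have key : ∀ p : P, ∃ f : X → unitInterval,
        ¬ s p ≤ L → f ∈ F ∧ f p.1.2 < J := by
      intro p
      by_cases hp : s p ≤ L
      · exact ⟨fun _ => 0, fun hc => absurd hp hc⟩
      · have hterm : s p ⊓ ⨅ f ∈ F, f p.1.2 ≤ L := le_iSup (fun p : P => s p ⊓ ⨅ f ∈ F, f p.1.2) p
        have hIp : (⨅ f ∈ F, f p.1.2) ≤ L := by
          rcases inf_le_iff.mp hterm with h1 | h1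
          · exact absurd h1 hp
          · exact h1
        have hlt : (⨅ f ∈ F, f p.1.2) < J := lt_of_le_of_lt hIp h
        by_contra hc
        push_neg at hc
        have : J ≤ ⨅ f ∈ F, f p.1.2 := le_iInf₂ fun f hf => (hc f).2 hf
        exact absurd (lt_of_le_of_lt this hlt) (lt_irrefl _)
    choose g hg using key
    set F₀ : Set (X → unitInterval) := g '' {p : P | ¬ s p ≤ L} with hF₀
    have hsub : F₀ ⊆ F := by
      rintro f ⟨p, hp, rfl⟩
      exact (hg p hp).1
    have hfin : F₀.Finite := (Set.toFinite _).image g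
    have hIle : J ≤ ⨆ p : P, s p ⊓ ⨅ f ∈ F₀, f p.1.2 :=
      iInf_le_of_le F₀ (iInf_le_of_le hsub (iInf_le _ hfin))
    have hterm : ∀ p : P, s p ⊓ (⨅ f ∈ F₀, f p.1.2) < J := by
      intro p
      by_cases hp : s p ≤ L
      · exact lt_of_le_of_lt (le_trans inf_le_left hp) h
      · have hmem : g p ∈ F₀ := ⟨p, hp, rfl⟩
        have : (⨅ f ∈ F₀, f p.1.2) ≤ g p p.1.2 := iInf₂_le _ hmem
        exact lt_of_le_of_lt (le_trans inf_le_right this) ((hg p hp).2)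
    rcases isEmpty_or_nonempty P with hE | hNE
    · have : L = ⊥ := by simp [hL]
      have hI' : J ≤ ⊥ := by
        refine le_trans hIle ?_
        simp
      exact absurd (lt_of_lt_of_le h hI') (by simp [this])
    · obtain ⟨p0, hp0⟩ := Finite.exists_max (fun p : P => s p ⊓ ⨅ f ∈ F₀, f p.1.2)
      have : (⨆ p : P, s p ⊓ ⨅ f ∈ F₀, f p.1.2) < J :=
        lt_of_le_of_lt (iSup_le fun p => hp0 p) (hterm p0)
      exact absurd (lt_of_le_of_lt hIle this) (lt_irrefl _)
end

section
/- Define α_S : 𝒫([0,1]^X) → DPMet(X) by α_S(ℱ)(x₁,x₂) = sup_{f∈ℱ} (f(x₁) ⊖ f(x₂)) and γ_S : DPMet(X) → 𝒫([0,1]^X) by γ_S(d) = {f ∣ ∀ x₁ x₂, f(x₁) ⊖ f(x₂) ≤ d(x₁,x₂)}. Then the co-closure α_S ∘ γ_S is the identity: for every directed pseudo-metric d on X, α_S(γ_S(d)) = d. -/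
open unitInterval

theorem stmt17 {X : Type*} (d : X → X → unitInterval)
    (hrefl : ∀ x, d x x = 0)
    (htri : ∀ x y z, d x z ≤ tadd (d x y) (d y z)) (x y : X) :
    (⨆ f : {f : X → unitInterval // ∀ a b, tsub (f a) (f b) ≤ d a b},
        tsub (f.1 x) (f.1 y)) = d x y := by
  apply le_antisymm
  · exact iSup_le fun f => f.2 x y
  · have hw : ∀ a b, tsub (d a y) (d b y) ≤ d a b := by
      intro a b
      have := htri a b y
      have h1 : (d a y).1 ≤ min 1 ((d a b).1 + (d b y).1) := this
      apply Subtype.coe_le_coe.mp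
      show max 0 ((d a y).1 - (d b y).1) ≤ (d a b).1
      have h2 := (d a b).2.1
      have h3 := min_le_right 1 ((d a b).1 + (d b y).1)
      exact max_le h2 (by linarith [le_trans h1 h3])
    have := le_iSup (fun f : {f : X → unitInterval // ∀ a b, tsub (f a) (f b) ≤ d a b} => tsub (f.1 x) (f.1 y)) ⟨fun a => d a y, hw⟩
    refine le_trans ?_ this
    apply Subtype.coe_le_coe.mp
    show (d x y).1 ≤ max 0 ((d x y).1 - (d y y).1)
    rw [hrefl y]
    simp [le_max_iff, le_sub_iff_add_le]
end

section
/- Let d be a directed pseudo-metric on X, ℱ = γ_S(d) the set of functions f : X → [0,1] with f(x) ⊖ f(y) ≤ d(x,y) for all x,y, and g ∈ ℱ. Then g equals op ∘ ⟨ℱ⟩ where op : [0,1]^ℱ → [0,1] is defined by op(v) = ⊓_{x∈X} ( g(x) ⊕ sup_{f∈ℱ} (v(f) ⊖ f(x)) ), and op is non-expansive with respect to the directed sup-metric: op(u) ⊖ op(v) ≤ sup_{f∈ℱ} (u(f) ⊖ v(f)) for all u, v ∈ [0,1]^ℱ. -/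
open unitInterval

lemma unit_le_iff {x y : unitInterval} : x ≤ y ↔ (x:ℝ) ≤ (y:ℝ) := Iff.rfl

lemma tsub_le_iff {x y z : unitInterval} : tsub x y ≤ z ↔ x ≤ tadd y z := by
  rw [unit_le_iff, unit_le_iff]
  simp only [tsub, tadd]
  constructor
  · intro h
    have h1 : (x:ℝ) - y ≤ z := le_trans (le_max_right _ _) h
    exact le_min x.2.2 (by linarith)
  · intro h
    have h1 : (x:ℝ) ≤ (y:ℝ) + z := le_trans h (min_le_right _ _)
    exact max_le z.2.1 (by linarith)

lemma tsub_le_iff' {x y z : unitInterval} : tsub x y ≤ z ↔ tsub x z ≤ y := by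
  rw [tsub_le_iff, tsub_le_iff]
  rw [unit_le_iff, unit_le_iff]
  simp only [tadd]
  constructor <;> intro h <;>
    [ (have := le_trans h (min_le_right _ _)); (have := le_trans h (min_le_right _ _))] <;>
    exact le_min x.2.2 (by linarith)

lemma tadd_mono {a a' b b' : unitInterval} (h1 : a ≤ a') (h2 : b ≤ b') :
    tadd a b ≤ tadd a' b' := by
  rw [unit_le_iff] at *
  exact min_le_min le_rfl (add_le_add h1 h2)

lemma tsub_mono {a a' b : unitInterval} (h1 : a ≤ a') : tsub a b ≤ tsub a' b := by
  rw [unit_le_iff] at *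
  exact max_le_max le_rfl (by linarith)

lemma tadd_assoc (a b c : unitInterval) : tadd (tadd a b) c = tadd a (tadd b c) := by
  apply Subtype.ext
  simp only [tadd]
  have ha0 := a.2.1; have hc0 := c.2.1; have ha1 := a.2.2; have hc1 := c.2.2
  rcases le_total ((a:ℝ) + b) 1 with h | h <;> rcases le_total ((b:ℝ) + c) 1 with h' | h' <;>
    simp [min_def] <;> split_ifs <;> linarith

lemma tadd_zero (a : unitInterval) : tadd a 0 = a := by
  apply Subtype.ext
  simp only [tadd]
  simpa using a.2.2

lemma tsub_self' (a : unitInterval) : tsub a a = 0 := by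
  apply Subtype.ext
  simp [tsub]

lemma tsub_triangle (a b c : unitInterval) :
    tsub a c ≤ tadd (tsub b c) (tsub a b) := by
  rw [unit_le_iff]
  simp only [tsub, tadd]
  refine max_le (le_min zero_le_one (by positivity)) (le_min ?_ ?_)
  · have := a.2.2; have := c.2.1; linarith
  · have h1 := le_max_right (0:ℝ) ((b:ℝ) - c)
    have h2 := le_max_right (0:ℝ) ((a:ℝ) - b)
    linarith

theorem stmt18 {X : Type*} (d : X → X → unitInterval)
    (hrefl : ∀ x, d x x = 0)
    (htri : ∀ x y z, d x z ≤ tadd (d x y) (d y z))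
    (g : X → unitInterval) (hg : ∀ a b, tsub (g a) (g b) ≤ d a b) :
    (∀ y, g y = ⨅ x, tadd (g x)
        (⨆ f : {f : X → unitInterval // ∀ a b, tsub (f a) (f b) ≤ d a b},
          tsub (f.1 y) (f.1 x))) ∧
    (∀ u v : {f : X → unitInterval // ∀ a b, tsub (f a) (f b) ≤ d a b} → unitInterval,
      tsub (⨅ x, tadd (g x) (⨆ f, tsub (u f) (f.1 x)))
           (⨅ x, tadd (g x) (⨆ f, tsub (v f) (f.1 x)))
        ≤ ⨆ f, tsub (u f) (v f)) := by
  constructor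
  · intro y
    apply le_antisymm
    · apply le_iInf
      intro x
      refine le_trans (tsub_le_iff.mp (le_refl (tsub (g y) (g x)))) ?_
      exact tadd_mono le_rfl (le_iSup (fun f : {f : X → unitInterval // ∀ a b, tsub (f a) (f b) ≤ d a b} => tsub (f.1 y) (f.1 x)) ⟨g, hg⟩)
    · refine le_trans (iInf_le _ y) ?_
      refine le_trans (tadd_mono le_rfl (iSup_le fun f => le_of_eq (tsub_self' (f.1 y)))) ?_
      exact le_of_eq (tadd_zero (g y))
  · intro u v
    rw [tsub_le_iff']
    apply le_iInf
    intro x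
    rw [← tsub_le_iff', tsub_le_iff]
    refine le_trans (iInf_le _ x) ?_
    rw [tadd_assoc]
    refine tadd_mono le_rfl ?_
    apply iSup_le
    intro f
    refine le_trans (tsub_triangle (u f) (v f) (f.1 x)) ?_
    exact tadd_mono (le_iSup (fun f => tsub (v f) (f.1 x)) f) (le_iSup (fun f => tsub (u f) (v f)) f)
end

section
/- Consider the Galois connection α : DPMet(X) → Pre(X), α(d) = {(x,y) ∣ d(x,y) = 0}, with right adjoint γ(R) = 1 − χ_R. For a finitely branching metric transition system with behaviour functions be_S(d)(x,y) = sup_{(a,x')∈δ(x)} inf_{(b,y')∈δ(y)} max(d_A(a,b), d(x',y')) on DPMet(X) and be_s(R) = {(x,y) ∣ ∀ a, ∀ x'∈δ_a(x), ∃ y'∈δ_a(y), (x',y') ∈ R} on Pre(X), we have α ∘ be_S = be_s ∘ α, i.e. α(be_S(d)) = be_s(α(d)) for every directed pseudo-metric d. -/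
open unitInterval

lemma unit_zero_eq_bot : (0 : unitInterval) = ⊥ := by
  apply Subtype.ext
  rfl

lemma unit_top_ne_bot : (⊤ : unitInterval) ≠ ⊥ :=
  bot_lt_top.ne'

theorem stmt19 {X A : Type*} (tr : X → A → X → Prop)
    (hfb : ∀ x, {p : A × X | tr x p.1 p.2}.Finite)
    (dA : A → A → unitInterval)
    (hA0 : ∀ a, dA a a = 0) (hAsymm : ∀ a b, dA a b = dA b a)
    (hAtri : ∀ a b c, dA a c ≤ tadd (dA a b) (dA b c))
    (hAsep : ∀ a b, dA a b = 0 → a = b)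
    (d : X → X → unitInterval)
    (hrefl : ∀ x, d x x = 0)
    (htri : ∀ x y z, d x z ≤ tadd (d x y) (d y z))
    (x y : X) :
    (⨆ p : {p : A × X // tr x p.1 p.2}, ⨅ q : {q : A × X // tr y q.1 q.2},
        dA p.1.1 q.1.1 ⊔ d p.1.2 q.1.2) = 0 ↔
      ∀ a x', tr x a x' → ∃ y', tr y a y' ∧ d x' y' = 0 := by
  haveI : Finite {q : A × X // tr y q.1 q.2} := (hfb y).to_subtype
  rw [unit_zero_eq_bot, iSup_eq_bot]
  constructor
  · intro h a x' hx
    have hp := h ⟨(a, x'), hx⟩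
    by_cases hne : Nonempty {q : A × X // tr y q.1 q.2}
    · obtain ⟨q0, hq0⟩ := Finite.exists_min
        (fun q : {q : A × X // tr y q.1 q.2} => dA a q.1.1 ⊔ d x' q.1.2)
      have heq : dA a q0.1.1 ⊔ d x' q0.1.2 = ⊥ :=
        le_antisymm (hp ▸ le_iInf hq0) bot_le
      obtain ⟨h1, h2⟩ := sup_eq_bot_iff.mp heq
      have ha : a = q0.1.1 := hAsep a q0.1.1 (by rw [unit_zero_eq_bot]; exact h1)
      refine ⟨q0.1.2, ?_, h2⟩
      have := q0.2
      rwa [← ha] at this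
    · rw [not_nonempty_iff] at hne
      rw [iInf_of_empty] at hp
      exact absurd hp unit_top_ne_bot
  · intro h p
    obtain ⟨y', hy', hd⟩ := h p.1.1 p.1.2 p.2
    apply le_antisymm _ bot_le
    refine le_trans (iInf_le _ ⟨(p.1.1, y'), hy'⟩) ?_
    rw [hA0, hd]
    exact sup_le (le_of_eq unit_zero_eq_bot) le_rfl
end
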